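/- For every integer l ≥ 2, the continuous multinomial coefficient x ↦ {x} is a real-analytic function on ℝ^l. -/

import Mathlib

/-- A word `w : Fin n → Fin l` is a Smirnov word if no two consecutive letters
are equal. -/
def IsSmirnov {l n : ℕ} (w : Fin n → Fin l) : Prop :=
  ∀ i : Fin n, ∀ h : (i : ℕ) + 1 < n, w i ≠ w ⟨(i : ℕ) + 1, h⟩

/-- `kcount w j` is the number of occurrences of the letter `j` in the word `w`. -/
noncomputable def kcount {l n : ℕ} (w : Fin n → Fin l) (j : Fin l) : ℕ :=
  Nat.card {i : Fin n // w i = j}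

/-- The continuous multinomial coefficient
`{x} = Σ_{n≥l} Σ_w Π_{j=1}^l x_j^{k_j(w)−1}/(k_j(w)−1)!`, the inner sum ranging
over all Smirnov words of length `n` over `{1,…,l}` in which every letter
occurs at least once. -/
noncomputable def contMultinomial (l : ℕ) (x : Fin l → ℝ) : ℝ :=
  ∑' p : Σ n : ℕ, {w : Fin n → Fin l // IsSmirnov w ∧ Function.Surjective w},
    ∏ j : Fin l, x j ^ (kcount p.2.1 j - 1) / (Nat.factorial (kcount p.2.1 j - 1) : ℝ)

/-!
The summand of a surjective word `w` of length `m + l` is a monomial of degree `m` with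
coefficient `∏_j 1/(k_j(w) - 1)! ≤ l^m / m!`, by the multinomial bound `m! / ∏ a_j! ≤ l^m`.
There are at most `l^(m + l)` such words, so the degree-`m` part of `{x}` is a multilinear map
of norm at most `l^l (l^2)^m / m!`. The resulting power series at `0` has infinite radius of
convergence and sums to `{x}` everywhere, which makes `{x}` analytic on all of `ℝ^l`.
-/

open Finset Function
open scoped Nat

namespace Nat

theorem multinomial_le_card_pow {ι : Type*} (s : Finset ι) (f : ι → ℕ) :
    multinomial s f ≤ #s ^ ∑ i ∈ s, f i := by
  classical
  set g : ι → ℕ := fun i => if i ∈ s then f i else 0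
  have hfg : ∀ i ∈ s, f i = g i := fun i hi => (if_pos hi).symm
  have hg : g ∈ piAntidiag s (∑ i ∈ s, f i) := by
    refine mem_piAntidiag.2 ⟨(sum_congr rfl hfg).symm, fun i hi => ?_⟩
    by_contra h
    exact hi (if_neg h)
  have h := sum_pow_eq_sum_piAntidiag s (fun _ => (1 : ℕ)) (∑ i ∈ s, f i)
  simp only [sum_const, smul_eq_mul, mul_one, one_pow, prod_const_one, Nat.cast_id] at h
  rw [multinomial_congr hfg, h]
  exact single_le_sum (fun _ _ => Nat.zero_le _) hg

theorem factorial_sum_le_card_pow_mul_prod {ι : Type*} (s : Finset ι) (f : ι → ℕ) :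
    (∑ i ∈ s, f i)! ≤ #s ^ (∑ i ∈ s, f i) * ∏ i ∈ s, (f i)! := by
  rw [← multinomial_spec, mul_comm]
  exact Nat.mul_le_mul_right _ (multinomial_le_card_pow s f)

end Nat

theorem prod_inv_factorial_le {ι : Type*} [Fintype ι] (a : ι → ℕ) :
    ∏ j, ((a j)! : ℝ)⁻¹ ≤ (Fintype.card ι : ℝ) ^ (∑ j, a j) / (∑ j, a j)! := by
  rw [prod_inv_distrib, le_div_iff₀ (by positivity), inv_mul_eq_div,
    div_le_iff₀ (by positivity)]
  exact_mod_cast Nat.factorial_sum_le_card_pow_mul_prod univ a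

theorem sum_kcount {l n : ℕ} (w : Fin n → Fin l) : ∑ j, kcount w j = n := by
  simp only [kcount, Nat.card_eq_fintype_card]
  rw [← Fintype.card_sigma, Fintype.card_congr (Equiv.sigmaFiberEquiv w), Fintype.card_fin]

theorem kcount_pos {l n : ℕ} {w : Fin n → Fin l} (hw : Surjective w) (j : Fin l) :
    0 < kcount w j :=
  have ⟨i, hi⟩ := hw j
  have : Nonempty {i // w i = j} := ⟨⟨i, hi⟩⟩
  Nat.card_pos

theorem sum_kcount_sub_one {l m : ℕ} {w : Fin (m + l) → Fin l} (hw : Surjective w) :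
    ∑ j, (kcount w j - 1) = m := by
  rw [sum_tsub_distrib _ fun j _ => kcount_pos hw j, sum_kcount]
  simp

theorem exists_kcount_eq {l m : ℕ} (a : Fin l → ℕ) (ha : ∑ j, a j = m) :
    ∃ f : Fin m → Fin l, ∀ j, kcount f j = a j := by
  subst ha
  refine ⟨fun i => (finSigmaFinEquiv.symm i).1, fun j => ?_⟩
  calc kcount (fun i => (finSigmaFinEquiv.symm i).1) j
      = Nat.card {p : Σ j, Fin (a j) // p.1 = j} :=
        Nat.card_congr (finSigmaFinEquiv.symm.subtypeEquiv fun _ => Iff.rfl)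
    _ = a j := by rw [Nat.card_congr (Equiv.sigmaSubtype j), Nat.card_eq_fintype_card,
        Fintype.card_fin]

section Monomial

variable {𝕜 : Type*} [NontriviallyNormedField 𝕜] {l m : ℕ}

def monomialMultilinear (f : Fin m → Fin l) :
    ContinuousMultilinearMap 𝕜 (fun _ : Fin m => Fin l → 𝕜) 𝕜 :=
  (ContinuousMultilinearMap.mkPiAlgebra 𝕜 (Fin m) 𝕜).compContinuousLinearMap
    fun i => ContinuousLinearMap.proj (f i)

theorem monomialMultilinear_apply (f : Fin m → Fin l) (v : Fin m → Fin l → 𝕜) :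
    monomialMultilinear f v = ∏ i, v i (f i) := by
  simp [monomialMultilinear]

theorem monomialMultilinear_apply_const (f : Fin m → Fin l) (x : Fin l → 𝕜) :
    monomialMultilinear f (fun _ => x) = ∏ j, x j ^ kcount f j := by
  rw [monomialMultilinear_apply, ← Fintype.prod_fiberwise f]
  refine prod_congr rfl fun j _ => ?_
  rw [prod_congr rfl fun i _ => congrArg x i.2, prod_const, card_univ, kcount,
    Nat.card_eq_fintype_card]

theorem norm_monomialMultilinear_le (f : Fin m → Fin l) :
    ‖monomialMultilinear (𝕜 := 𝕜) f‖ ≤ 1 := by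
  refine ContinuousMultilinearMap.opNorm_le_bound zero_le_one fun v => ?_
  rw [monomialMultilinear_apply, norm_prod, one_mul]
  exact prod_le_prod (fun _ _ => norm_nonneg _) fun i _ => norm_le_pi_norm (v i) (f i)

end Monomial

abbrev SurjSmirnovWord (l n : ℕ) := {w : Fin n → Fin l // IsSmirnov w ∧ Surjective w}

noncomputable instance (l n : ℕ) : Fintype (SurjSmirnovWord l n) := Fintype.ofFinite _

theorem card_surjSmirnovWord_le (l n : ℕ) : Fintype.card (SurjSmirnovWord l n) ≤ l ^ n :=
  (Fintype.card_subtype_le _).trans (by simp)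

noncomputable def smirnovMonomial {l n : ℕ} (w : Fin n → Fin l) (x : Fin l → ℝ) : ℝ :=
  ∏ j, x j ^ (kcount w j - 1) / ((kcount w j - 1)! : ℝ)

/-- The monomial `∏_j x_j ^ (k_j(w) - 1)` is realized through some word of length `m` with
`k_j(w) - 1` copies of each letter `j`. -/
noncomputable def smirnovMultilinear {l m : ℕ} {w : Fin (m + l) → Fin l} (hw : Surjective w) :
    ContinuousMultilinearMap ℝ (fun _ : Fin m => Fin l → ℝ) ℝ :=
  (∏ j, ((kcount w j - 1)! : ℝ)⁻¹) •
    monomialMultilinear (exists_kcount_eq _ (sum_kcount_sub_one hw)).choose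

section SmirnovMultilinear

variable {l m : ℕ} {w : Fin (m + l) → Fin l} (hw : Surjective w)

theorem smirnovMultilinear_apply_const (x : Fin l → ℝ) :
    smirnovMultilinear hw (fun _ => x) = smirnovMonomial w x := by
  simp only [smirnovMultilinear, smul_apply, monomialMultilinear_apply_const,
    (exists_kcount_eq _ (sum_kcount_sub_one hw)).choose_spec, smul_eq_mul,
    ← prod_mul_distrib, smirnovMonomial, div_eq_mul_inv, mul_comm]

theorem norm_smirnovMultilinear_le : ‖smirnovMultilinear hw‖ ≤ (l : ℝ) ^ m / m ! := by
  have hcoeff := prod_inv_factorial_le fun j => kcount w j - 1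
  rw [sum_kcount_sub_one hw, Fintype.card_fin] at hcoeff
  rw [smirnovMultilinear, norm_smul, Real.norm_of_nonneg (by positivity)]
  exact (mul_le_of_le_one_right (by positivity) (norm_monomialMultilinear_le _)).trans hcoeff

theorem norm_smirnovMonomial_le (x : Fin l → ℝ) :
    ‖smirnovMonomial w x‖ ≤ ‖smirnovMultilinear hw‖ * ‖x‖ ^ m := by
  rw [← smirnovMultilinear_apply_const hw]
  exact ContinuousMultilinearMap.le_opNorm_mul_pow_of_le _ (pi_norm_const_le x)

end SmirnovMultilinear

theorem summable_sum_norm_smirnovMultilinear_mul_pow (l : ℕ) {r : ℝ} (hr : 0 ≤ r) :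
    Summable fun m =>
      (∑ w : SurjSmirnovWord l (m + l), ‖smirnovMultilinear w.2.2‖) * r ^ m := by
  refine .of_nonneg_of_le (fun m => by positivity) (fun m => ?_)
    ((Real.summable_pow_div_factorial ((l : ℝ) ^ 2 * r)).mul_left ((l : ℝ) ^ l))
  have hsum : ∑ w : SurjSmirnovWord l (m + l), ‖smirnovMultilinear w.2.2‖
      ≤ (l : ℝ) ^ (m + l) * ((l : ℝ) ^ m / m !) := by
    refine (sum_le_sum fun w _ => norm_smirnovMultilinear_le w.2.2).trans ?_
    rw [sum_const, card_univ, nsmul_eq_mul]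
    gcongr
    exact_mod_cast card_surjSmirnovWord_le l (m + l)
  calc (∑ w : SurjSmirnovWord l (m + l), ‖smirnovMultilinear w.2.2‖) * r ^ m
      ≤ (l : ℝ) ^ (m + l) * ((l : ℝ) ^ m / m !) * r ^ m := by gcongr
    _ = (l : ℝ) ^ l * (((l : ℝ) ^ 2 * r) ^ m / m !) := by ring

noncomputable def contMultinomialSeries (l : ℕ) : FormalMultilinearSeries ℝ (Fin l → ℝ) ℝ :=
  fun m => ∑ w : SurjSmirnovWord l (m + l), smirnovMultilinear w.2.2

theorem radius_contMultinomialSeries (l : ℕ) : (contMultinomialSeries l).radius = ⊤ :=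
  FormalMultilinearSeries.radius_eq_top_of_summable_norm _ fun r =>
    (summable_sum_norm_smirnovMultilinear_mul_pow l r.2).of_nonneg_of_le
      (fun _ => by positivity) fun _ =>
        mul_le_mul_of_nonneg_right (norm_sum_le _ _) (by positivity)

theorem summable_smirnovMonomial (l : ℕ) (x : Fin l → ℝ) :
    Summable fun p : Σ m, SurjSmirnovWord l (m + l) => smirnovMonomial p.2.1 x := by
  refine .of_norm ((summable_sigma_of_nonneg fun _ => norm_nonneg _).2
    ⟨fun _ => .of_finite, ?_⟩)
  refine (summable_sum_norm_smirnovMultilinear_mul_pow l (norm_nonneg x)).of_nonneg_of_le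
    (fun _ => tsum_nonneg fun _ => norm_nonneg _) fun m => ?_
  rw [tsum_fintype, sum_mul]
  exact sum_le_sum fun w _ => norm_smirnovMonomial_le w.2.2 x

theorem hasSum_smirnovMonomial (l : ℕ) (x : Fin l → ℝ) :
    HasSum (fun p : Σ m, SurjSmirnovWord l (m + l) => smirnovMonomial p.2.1 x)
      (contMultinomial l x) := by
  set shift : (Σ m, SurjSmirnovWord l (m + l)) → Σ n, SurjSmirnovWord l n :=
    fun p => ⟨p.1 + l, p.2⟩
  have hshift : Injective shift := by
    rintro ⟨m, w⟩ ⟨m', w'⟩ h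
    obtain rfl : m = m' := by simpa [shift] using congrArg Sigma.fst h
    simpa [shift] using h
  have hzero : ∀ p ∉ Set.range shift, smirnovMonomial p.2.1 x = 0 := by
    rintro ⟨n, w⟩ hp
    have hln : l ≤ n := by simpa using Fintype.card_le_of_surjective _ w.2.2
    obtain ⟨m, rfl⟩ : ∃ m, n = m + l := ⟨n - l, by omega⟩
    exact absurd ⟨⟨m, w⟩, rfl⟩ hp
  have hsum := (hshift.summable_iff hzero).1 (summable_smirnovMonomial l x)
  exact (hshift.hasSum_iff hzero).2 hsum.hasSum

theorem hasSum_contMultinomialSeries (l : ℕ) (x : Fin l → ℝ) :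
    HasSum (fun m => contMultinomialSeries l m fun _ => x) (contMultinomial l x) := by
  convert (hasSum_smirnovMonomial l x).sigma fun m => hasSum_fintype _ using 2 with m
  simp only [contMultinomialSeries, _root_.sum_apply, smirnovMultilinear_apply_const]

theorem contMultinomial_analytic_general (l : ℕ) :
    AnalyticOnNhd ℝ (fun x : Fin l → ℝ => contMultinomial l x) Set.univ := by
  have h : HasFPowerSeriesOnBall (contMultinomial l) (contMultinomialSeries l) 0 ⊤ :=
    { r_le := (radius_contMultinomialSeries l).ge
      r_pos := ENNReal.zero_lt_top
      hasSum := fun _ => by simpa using hasSum_contMultinomialSeries l _ }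
  simpa [Metric.eball_top] using h.analyticOnNhd

/-- For every integer `l ≥ 2`, the continuous multinomial coefficient
`x ↦ {x}` is a real-analytic function on `ℝ^l`. -/
theorem contMultinomial_analytic (l : ℕ) (hl : 2 ≤ l) :
    AnalyticOnNhd ℝ (fun x : Fin l → ℝ => contMultinomial l x) Set.univ :=
  contMultinomial_analytic_general l
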